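/- arXiv:2004.02850 — 4 statements merged into one kernel-verified Lean document; each statement's English description precedes it below -/
import Mathlib

section
/- Let H be a finite-dimensional complex inner product space, Z ⊆ H a subspace, and K a Δ-AGSP for Z (with 0 ≤ Δ). Let V ⊆ H be a subspace that is μ-overlapping onto Z for some μ ∈ (0,1]. Then the image subspace K(V) is μ'-overlapping onto Z, where μ' = μ/(μ + Δ(1−μ)); equivalently, writing δ = 1−μ and δ' = 1−μ', one has δ'/μ' ≤ Δ·δ/μ. -/
noncomputable section

variable {H : Type*} [NormedAddCommGroup H] [InnerProductSpace ℂ H] [FiniteDimensional ℂ H]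

/-- `K` is a `Δ`-AGSP for the subspace `Z`: it fixes `Z` pointwise, maps `Zᗮ` into `Zᗮ`,
and shrinks vectors of `Zᗮ` by a factor `√Δ`. -/
def IsAGSP (K : H →L[ℂ] H) (Z : Submodule ℂ H) (Δ : ℝ) : Prop :=
  (∀ z ∈ Z, K z = z) ∧ (∀ w ∈ Zᗮ, K w ∈ Zᗮ) ∧ ∀ w ∈ Zᗮ, ‖K w‖ ≤ Real.sqrt Δ * ‖w‖

/-- `Y` is `μ`-overlapping onto `Z`: every unit vector of `Z` has squared projection
onto `Y` at least `μ`. -/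
def Overlapping (Y Z : Submodule ℂ H) (μ : ℝ) : Prop :=
  ∀ z ∈ Z, ‖z‖ = 1 → μ ≤ ‖(Y.orthogonalProjectionOnto z : H)‖ ^ 2

open scoped ComplexInnerProductSpace

lemma inner_proj_self' (V : Submodule ℂ H) (y : H) :
    ⟪y, (Submodule.orthogonalProjectionOnto V y : H)⟫ = (‖(Submodule.orthogonalProjectionOnto V y : H)‖ : ℂ) ^ 2 := by
  have h : ⟪y - (Submodule.orthogonalProjectionOnto V y : H), (Submodule.orthogonalProjectionOnto V y : H)⟫ = 0 :=
    Submodule.starProjection_inner_eq_zero (K := V) y (Submodule.orthogonalProjectionOnto V y : H) (SetLike.coe_mem _)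
  rw [inner_sub_left] at h
  have h2 : ⟪y, (Submodule.orthogonalProjectionOnto V y : H)⟫
      = ⟪(Submodule.orthogonalProjectionOnto V y : H), (Submodule.orthogonalProjectionOnto V y : H)⟫ := by
    linear_combination h
  rw [h2, inner_self_eq_norm_sq_to_K]
  norm_num

lemma inner_eq_inner_proj (Z : Submodule ℂ H) {x : H} (hx : x ∈ Z) (y : H) :
    ⟪x, y⟫ = ⟪x, (Submodule.orthogonalProjectionOnto Z y : H)⟫ := by
  have h := Submodule.sub_starProjection_mem_orthogonal (K := Z) y
  have h0 : ⟪x, y - (Submodule.orthogonalProjectionOnto Z y : H)⟫ = 0 :=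
    (Submodule.mem_orthogonal Z _).mp h x hx
  rw [inner_sub_right] at h0
  linear_combination h0

lemma overlap_scaled {Z V : Submodule ℂ H} {μ : ℝ} (hV : Overlapping V Z μ)
    {x : H} (hx : x ∈ Z) :
    μ * ‖x‖ ^ 2 ≤ ‖(Submodule.orthogonalProjectionOnto V x : H)‖ ^ 2 := by
  rcases eq_or_ne x 0 with rfl | hx0
  · simp
  · have hn : (0:ℝ) < ‖x‖ := norm_pos_iff.mpr hx0
    set c : ℂ := (‖x‖ : ℂ)⁻¹ with hc
    have hmem : c • x ∈ Z := Z.smul_mem c hx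
    have hnorm : ‖c • x‖ = 1 := by
      rw [norm_smul, hc]; simp [hn.ne']
    have h := hV (c • x) hmem hnorm
    have hcoe : ((Submodule.orthogonalProjectionOnto V (c • x) : H)) = c • (Submodule.orthogonalProjectionOnto V x : H) := by
      rw [map_smul]; rfl
    rw [hcoe, norm_smul, hc] at h
    have hcn : ‖((‖x‖:ℂ))⁻¹‖ = ‖x‖⁻¹ := by simp
    rw [hcn, mul_pow] at h
    have := mul_le_mul_of_nonneg_left h (le_of_lt (by positivity : (0:ℝ) < ‖x‖ ^ 2))
    calc μ * ‖x‖ ^ 2 = ‖x‖ ^ 2 * μ := by ring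
    _ ≤ ‖x‖ ^ 2 * ((‖x‖⁻¹) ^ 2 * ‖(Submodule.orthogonalProjectionOnto V x : H)‖ ^ 2) := this
    _ = ‖(Submodule.orthogonalProjectionOnto V x : H)‖ ^ 2 := by field_simp

/-- Surjectivity of `P_Z ∘ P_V` on `Z` when the overlap is positive. -/
lemma exists_overlap_preimage (Z V : Submodule ℂ H) {μ : ℝ} (hμ0 : 0 < μ)
    (hV : Overlapping V Z μ) {z : H} (hz : z ∈ Z) :
    ∃ x ∈ Z, (Submodule.orthogonalProjectionOnto Z (Submodule.orthogonalProjectionOnto V x : H) : H) = z := by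
  let L : Z →ₗ[ℂ] Z :=
    { toFun := fun x => Submodule.orthogonalProjectionOnto Z (Submodule.orthogonalProjectionOnto V (x : H) : H)
      map_add' := by intro a b; simp [Submodule.coe_add, map_add]
      map_smul' := by intro c a; simp [Submodule.coe_smul, map_smul] }
  have hinj : Function.Injective L := by
    rw [← LinearMap.ker_eq_bot, LinearMap.ker_eq_bot']
    intro m hm
    have hm0 : (Submodule.orthogonalProjectionOnto Z (Submodule.orthogonalProjectionOnto V (m : H) : H) : H) = 0 := by
      have : L m = 0 := hm
      simpa [L] using congrArg (Subtype.val) this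
    have h1 : ⟪(m : H), (Submodule.orthogonalProjectionOnto V (m : H) : H)⟫ = 0 := by
      rw [inner_eq_inner_proj Z m.2, hm0, inner_zero_right]
    rw [inner_proj_self' V (m : H)] at h1
    have h2 : ‖(Submodule.orthogonalProjectionOnto V (m : H) : H)‖ ^ 2 = 0 := by exact_mod_cast h1
    have h3 := overlap_scaled hV m.2
    rw [h2] at h3
    have : ‖(m : H)‖ = 0 := by
      by_contra hne
      have hpos : 0 < ‖(m : H)‖ ^ 2 := by positivity
      nlinarith
    exact Subtype.ext (norm_eq_zero.mp this)
  have hsurj : Function.Surjective L := (LinearMap.injective_iff_surjective).mp hinj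
  obtain ⟨x, hx⟩ := hsurj ⟨z, hz⟩
  exact ⟨(x : H), x.2, by simpa [L] using congrArg (Subtype.val) hx⟩

set_option maxHeartbeats 1000000 in
/-- Error reduction by an AGSP: if `V` is `μ`-overlapping onto `Z` and `K` is a `Δ`-AGSP for
`Z`, then the image `K(V)` is `μ'`-overlapping onto `Z` with `μ' = μ / (μ + Δ(1-μ))`
(equivalently `δ'/μ' ≤ Δ·δ/μ` for `δ = 1-μ`, `δ' = 1-μ'`). -/
theorem agsp_error_reduction (Z V : Submodule ℂ H) (K : H →L[ℂ] H) (Δ μ : ℝ)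
    (hΔ : 0 ≤ Δ) (hK : IsAGSP K Z Δ) (hμ0 : 0 < μ) (hμ1 : μ ≤ 1)
    (hV : Overlapping V Z μ) :
    Overlapping (V.map (K : H →ₗ[ℂ] H)) Z (μ / (μ + Δ * (1 - μ))) := by
  intro z hz hznorm
  obtain ⟨x, hxZ, hx⟩ := exists_overlap_preimage Z V hμ0 hV hz
  set v : H := (Submodule.orthogonalProjectionOnto V x : H) with hv
  have hvV : v ∈ V := SetLike.coe_mem _
  set w : H := v - z with hwdef
  have hw : w ∈ Zᗮ := by
    have : v - (Submodule.orthogonalProjectionOnto Z v : H) ∈ Zᗮ := Submodule.sub_starProjection_mem_orthogonal (K := Z) v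
    rwa [hx] at this
  -- ⟪x, z⟫ = ‖v‖²
  have hxz : ⟪x, z⟫ = (‖v‖ : ℂ) ^ 2 := by
    have h1 := inner_proj_self' V x
    have h2 := inner_eq_inner_proj Z hxZ v
    rw [hx] at h2
    rw [← h2]
    exact h1
  -- ‖v‖² ≤ ‖x‖
  have hvx : ‖v‖ ^ 2 ≤ ‖x‖ := by
    have h1 : ‖(⟪x, z⟫ : ℂ)‖ ≤ ‖x‖ * ‖z‖ := norm_inner_le_norm x z
    rw [hxz, hznorm, mul_one] at h1
    calc ‖v‖ ^ 2 = ‖((‖v‖ : ℂ)) ^ 2‖ := by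
          rw [norm_pow, Complex.norm_real]; simp
    _ ≤ ‖x‖ := h1
  have hμx : μ * ‖x‖ ^ 2 ≤ ‖v‖ ^ 2 := overlap_scaled hV hxZ
  have hxbound : ‖x‖ ≤ 1 / μ := by
    rcases eq_or_lt_of_le (norm_nonneg x) with h0 | h0
    · rw [← h0]; positivity
    · have : μ * ‖x‖ ≤ 1 := by nlinarith
      rw [le_div_iff₀ hμ0]; linarith [mul_comm μ ‖x‖]
  have hvbound : ‖v‖ ^ 2 ≤ 1 / μ := le_trans hvx hxbound
  -- Pythagoras: ‖v‖² = 1 + ‖w‖²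
  have hzw : ⟪z, w⟫ = 0 := (Submodule.mem_orthogonal Z w).mp hw z hz
  have hvzw : v = z + w := by rw [hwdef]; abel
  have hpyth : ‖v‖ ^ 2 = 1 + ‖w‖ ^ 2 := by
    rw [hvzw, pow_two, norm_add_sq_eq_norm_sq_add_norm_sq_of_inner_eq_zero z w hzw, hznorm]
    ring
  have hwbound : ‖w‖ ^ 2 ≤ 1 / μ - 1 := by linarith
  -- the witness u = K v
  set u : H := K v with hu
  have huW : u ∈ V.map (K : H →ₗ[ℂ] H) := Submodule.mem_map_of_mem hvV
  have hKz : K z = z := hK.1 z hz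
  have hKwmem : K w ∈ Zᗮ := hK.2.1 w hw
  have huzw : u = z + K w := by rw [hu, hvzw, map_add, hKz]
  have hKwnorm : ‖K w‖ ^ 2 ≤ Δ * ‖w‖ ^ 2 := by
    have h := hK.2.2 w hw
    have hs : Real.sqrt Δ ^ 2 = Δ := Real.sq_sqrt hΔ
    nlinarith [norm_nonneg (K w), norm_nonneg w, Real.sqrt_nonneg Δ]
  have hzKw : ⟪z, K w⟫ = 0 := (Submodule.mem_orthogonal Z (K w)).mp hKwmem z hz
  have hunorm : ‖u‖ ^ 2 = 1 + ‖K w‖ ^ 2 := by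
    rw [huzw, pow_two, norm_add_sq_eq_norm_sq_add_norm_sq_of_inner_eq_zero z (K w) hzKw, hznorm]
    ring
  have hKwz : ⟪K w, z⟫ = 0 := inner_eq_zero_symm.mp hzKw
  have huz : ⟪u, z⟫ = 1 := by
    rw [huzw, inner_add_left, hKwz, inner_self_eq_norm_sq_to_K, hznorm]
    norm_num
  -- projection lower bound
  set p : H := (Submodule.orthogonalProjectionOnto (V.map (K : H →ₗ[ℂ] H)) z : H) with hp
  have hup : ⟪u, p⟫ = 1 := by rw [← inner_eq_inner_proj (V.map (K : H →ₗ[ℂ] H)) huW z]; exact huz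
  have h1up : (1:ℝ) ≤ ‖u‖ * ‖p‖ := by
    have := norm_inner_le_norm (𝕜 := ℂ) u p
    rw [hup] at this; simpa using this
  -- final arithmetic
  have hD : 0 < μ + Δ * (1 - μ) := by nlinarith
  have hUP : (1:ℝ) ≤ ‖u‖ ^ 2 * ‖p‖ ^ 2 := by
    have : (1:ℝ) ≤ (‖u‖ * ‖p‖) ^ 2 := by nlinarith [sq_nonneg (‖u‖ * ‖p‖ - 1)]
    rwa [mul_pow] at this
  have hinv : μ * (1 / μ) = 1 := mul_one_div_cancel hμ0.ne'
  have hMU : μ * ‖u‖ ^ 2 ≤ μ + Δ * (1 - μ) := by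
    nlinarith [mul_le_mul_of_nonneg_left hKwnorm hμ0.le,
      mul_le_mul_of_nonneg_left hwbound (mul_nonneg hμ0.le hΔ)]
  rw [div_le_iff₀ hD]
  nlinarith [mul_le_mul_of_nonneg_right hMU (sq_nonneg ‖p‖),
    mul_le_mul_of_nonneg_left hUP hμ0.le]
end
end

section
/- Let H be a finite-dimensional complex inner product space, Z ⊆ H a subspace, and K a Δ-AGSP for Z with 0 ≤ Δ. Let V ⊆ H be a subspace that is μ-overlapping onto Z for some μ ∈ (0,1]. Then for every natural number p, the subspace K^p(V) satisfies ‖P_{K^p(V)} z‖² ≥ 1 − Δ^p/μ for every unit vector z ∈ Z; in particular K^p(V) is (Δ^p/μ)-viable for Z. -/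
/-!
Given a unit vector `z ∈ Z`, the overlap hypothesis makes the compression `P_Z P_V` of `P_V` to `Z`
coercive, hence invertible on the finite-dimensional space `Z`; a preimage `y` of `z` yields
`v = P_V y ∈ V` with `P_Z v = z` and `‖v‖² ≤ 1/μ`. Writing `v = z + w` with `w ⊥ Z`, the AGSP fixes
`z` and shrinks `w`, so `K^p v = z + e` with `‖e‖² ≤ Δ^p/μ`. Testing `P_{K^p V} z` against this
vector gives `‖P_{K^p V} z‖² ≥ 1/(1 + ‖e‖²) ≥ 1 - ‖e‖²`.
-/

noncomputable section

variable {H : Type*} [NormedAddCommGroup H] [InnerProductSpace ℂ H] [FiniteDimensional ℂ H]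

open scoped InnerProductSpace

section Projection

variable {𝕜 E : Type*} [RCLike 𝕜] [NormedAddCommGroup E] [InnerProductSpace 𝕜 E]

theorem Submodule.norm_inner_le_norm_mul_norm_starProjection {W : Submodule 𝕜 E}
    [W.HasOrthogonalProjection] {u : E} (hu : u ∈ W) (z : E) :
    ‖⟪u, z⟫_𝕜‖ ≤ ‖u‖ * ‖W.starProjection z‖ := by
  rw [← W.starProjection_eq_self_iff.mpr hu, W.inner_starProjection_left_eq_right,
    W.starProjection_eq_self_iff.mpr hu]
  exact norm_inner_le_norm _ _

theorem Submodule.one_sub_norm_sq_le_norm_starProjection_sq {W : Submodule 𝕜 E}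
    [W.HasOrthogonalProjection] {z e : E} (hz : ‖z‖ = 1) (he : ⟪z, e⟫_𝕜 = 0) (hu : z + e ∈ W) :
    1 - ‖e‖ ^ 2 ≤ ‖W.starProjection z‖ ^ 2 := by
  have h_inner : ⟪z + e, z⟫_𝕜 = 1 := by
    rw [inner_add_left, inner_eq_zero_symm.mp he, inner_self_eq_norm_sq_to_K, hz]
    simp
  have h_norm : ‖z + e‖ ^ 2 = 1 + ‖e‖ ^ 2 := by
    rw [sq, sq, norm_add_sq_eq_norm_sq_add_norm_sq_of_inner_eq_zero z e he, hz, one_mul]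
  have h_cs := W.norm_inner_le_norm_mul_norm_starProjection hu z
  rw [h_inner, norm_one] at h_cs
  have h_sq : 1 ≤ (1 + ‖e‖ ^ 2) * ‖W.starProjection z‖ ^ 2 := by
    rw [← h_norm, ← mul_pow]
    exact one_le_pow₀ h_cs
  nlinarith [sq_nonneg ‖e‖, sq_nonneg (‖e‖ ^ 2)]

theorem Submodule.mul_norm_sq_le_norm_starProjection_sq {Z V : Submodule 𝕜 E}
    [V.HasOrthogonalProjection] {μ : ℝ}
    (hV : ∀ z ∈ Z, ‖z‖ = 1 → μ ≤ ‖V.starProjection z‖ ^ 2) {x : E} (hx : x ∈ Z) :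
    μ * ‖x‖ ^ 2 ≤ ‖V.starProjection x‖ ^ 2 := by
  rcases eq_or_ne x 0 with rfl | hx0
  · simp
  have hnx : ‖x‖ ≠ 0 := norm_ne_zero_iff.mpr hx0
  have h := hV (((‖x‖⁻¹ : ℝ) : 𝕜) • x) (Z.smul_mem _ hx) (by
    rw [norm_smul, RCLike.norm_ofReal, abs_inv, abs_norm, inv_mul_cancel₀ hnx])
  rw [map_smul, norm_smul, RCLike.norm_ofReal, abs_inv, abs_norm, mul_pow, inv_pow,
    le_inv_mul_iff₀ (by positivity)] at h
  linarith

theorem Submodule.re_inner_starProjection_starProjection {Z : Submodule 𝕜 E}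
    [Z.HasOrthogonalProjection] (V : Submodule 𝕜 E) [V.HasOrthogonalProjection] {y : E}
    (hy : y ∈ Z) : RCLike.re ⟪y, Z.starProjection (V.starProjection y)⟫_𝕜 =
      ‖V.starProjection y‖ ^ 2 := by
  rw [← Z.inner_starProjection_left_eq_right, Z.starProjection_eq_self_iff.mpr hy,
    ← V.inner_starProjection_left_eq_right, V.re_inner_starProjection_eq_normSq]
  rfl

theorem Submodule.exists_mem_starProjection_starProjection_eq {Z V : Submodule 𝕜 E}
    [FiniteDimensional 𝕜 Z] [V.HasOrthogonalProjection] (hZV : Disjoint Z Vᗮ) {z : E}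
    (hz : z ∈ Z) : ∃ y ∈ Z, Z.starProjection (V.starProjection y) = z := by
  let T : Z →ₗ[𝕜] Z :=
    (Z.orthogonalProjectionOnto : E →ₗ[𝕜] Z) ∘ₗ (V.starProjection : E →ₗ[𝕜] E) ∘ₗ Z.subtype
  have hT_inj : Function.Injective T := by
    refine (injective_iff_map_eq_zero T).mpr fun y hy => ?_
    have h0 := Z.re_inner_starProjection_starProjection V y.2
    rw [show Z.starProjection (V.starProjection y) = 0 from congrArg Subtype.val hy,
      inner_zero_right, map_zero, eq_comm, sq_eq_zero_iff, norm_eq_zero,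
      V.starProjection_apply_eq_zero_iff] at h0
    exact Subtype.ext (Submodule.disjoint_def.mp hZV y y.2 h0)
  obtain ⟨y, hy⟩ := LinearMap.injective_iff_surjective.mp hT_inj ⟨z, hz⟩
  exact ⟨y, y.2, congrArg Subtype.val hy⟩

theorem Submodule.exists_add_mem_mul_norm_sq_le {Z V : Submodule 𝕜 E} [FiniteDimensional 𝕜 Z]
    [V.HasOrthogonalProjection] {μ : ℝ} (hμ : 0 < μ)
    (hV : ∀ x ∈ Z, μ * ‖x‖ ^ 2 ≤ ‖V.starProjection x‖ ^ 2) {z : E} (hz : z ∈ Z) :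
    ∃ w ∈ Zᗮ, z + w ∈ V ∧ μ * ‖z + w‖ ^ 2 ≤ ‖z‖ ^ 2 := by
  have hZV : Disjoint Z Vᗮ := Submodule.disjoint_def.mpr fun x hxZ hxV => by
    have h := hV x hxZ
    rw [V.starProjection_apply_eq_zero_iff.mpr hxV, norm_zero, zero_pow two_ne_zero] at h
    exact norm_eq_zero.mp ((sq_nonpos_iff _).mp (nonpos_of_mul_nonpos_right h hμ))
  obtain ⟨y, hyZ, hPz⟩ := Z.exists_mem_starProjection_starProjection_eq hZV hz
  set v := V.starProjection y
  refine ⟨v - z, hPz ▸ Z.sub_starProjection_mem_orthogonal v, ?_, ?_⟩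
  · rw [add_sub_cancel]
    exact V.starProjection_apply_mem y
  rw [add_sub_cancel]
  have h_upper : ‖v‖ ^ 2 ≤ ‖y‖ * ‖z‖ := by
    rw [← Z.re_inner_starProjection_starProjection V hyZ, hPz]
    exact (RCLike.re_le_norm _).trans (norm_inner_le_norm _ _)
  have h_lower := hV y hyZ
  have h_norm_y : μ * ‖y‖ ≤ ‖z‖ := by
    rcases (norm_nonneg y).eq_or_lt with hy0 | hy0
    · rw [← hy0, mul_zero]
      exact norm_nonneg z
    · exact le_of_mul_le_mul_right (by nlinarith) hy0
  calc μ * ‖v‖ ^ 2 ≤ μ * ‖y‖ * ‖z‖ := by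
        rw [mul_assoc]
        exact mul_le_mul_of_nonneg_left h_upper hμ.le
    _ ≤ ‖z‖ ^ 2 := by
        rw [sq]
        exact mul_le_mul_of_nonneg_right h_norm_y (norm_nonneg z)

end Projection

namespace IsAGSP

variable {E : Type*} [NormedAddCommGroup E] [InnerProductSpace ℂ E] {K : E →L[ℂ] E}
  {Z : Submodule ℂ E} {Δ : ℝ}

theorem pow_apply_of_mem (hK : IsAGSP K Z Δ) (n : ℕ) {z : E} (hz : z ∈ Z) : (K ^ n) z = z := by
  induction n with
  | zero => rfl
  | succ n ih =>
    rw [pow_succ']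
    exact (congrArg K ih).trans (hK.1 z hz)

theorem pow_apply_mem_orthogonal (hK : IsAGSP K Z Δ) (n : ℕ) {w : E} (hw : w ∈ Zᗮ) :
    (K ^ n) w ∈ Zᗮ := by
  induction n with
  | zero => exact hw
  | succ n ih =>
    rw [pow_succ']
    exact hK.2.1 _ ih

theorem norm_sq_pow_apply_le (hK : IsAGSP K Z Δ) (hΔ : 0 ≤ Δ) (n : ℕ) {w : E} (hw : w ∈ Zᗮ) :
    ‖(K ^ n) w‖ ^ 2 ≤ Δ ^ n * ‖w‖ ^ 2 := by
  induction n generalizing w with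
  | zero => simp
  | succ n ih =>
    have h_step : ‖K w‖ ^ 2 ≤ Δ * ‖w‖ ^ 2 := by
      calc ‖K w‖ ^ 2 ≤ (√Δ * ‖w‖) ^ 2 := by gcongr; exact hK.2.2 w hw
        _ = Δ * ‖w‖ ^ 2 := by rw [mul_pow, Real.sq_sqrt hΔ]
    calc ‖(K ^ (n + 1)) w‖ ^ 2 = ‖(K ^ n) (K w)‖ ^ 2 := by
          rw [pow_succ]
          rfl
      _ ≤ Δ ^ n * ‖K w‖ ^ 2 := ih (hK.2.1 w hw)
      _ ≤ Δ ^ (n + 1) * ‖w‖ ^ 2 := by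
          rw [pow_succ Δ, mul_assoc]
          gcongr

end IsAGSP

theorem agsp_iterated_error_reduction_general (Z V : Submodule ℂ H) (K : H →L[ℂ] H) (Δ μ : ℝ)
    (hΔ : 0 ≤ Δ) (hK : IsAGSP K Z Δ) (hμ0 : 0 < μ)
    (hV : ∀ z ∈ Z, ‖z‖ = 1 → μ ≤ ‖(Submodule.orthogonalProjectionOnto V z : H)‖ ^ 2) (p : ℕ) :
    ∀ z ∈ Z, ‖z‖ = 1 →
      1 - Δ ^ p / μ ≤ ‖(Submodule.orthogonalProjectionOnto (V.map ((K ^ p : H →L[ℂ] H) : H →ₗ[ℂ] H)) z : H)‖ ^ 2 := by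
  intro z hz hz1
  obtain ⟨w, hw, hzw_mem, hzw_norm⟩ := Submodule.exists_add_mem_mul_norm_sq_le hμ0
    (fun x hx => Submodule.mul_norm_sq_le_norm_starProjection_sq hV hx) hz
  have h_mem : z + (K ^ p) w ∈ V.map ((K ^ p : H →L[ℂ] H) : H →ₗ[ℂ] H) :=
    ⟨z + w, hzw_mem, by rw [map_add]; exact congrArg (· + _) (hK.pow_apply_of_mem p hz)⟩
  have h_proj := Submodule.one_sub_norm_sq_le_norm_starProjection_sq hz1
    (Submodule.inner_right_of_mem_orthogonal hz (hK.pow_apply_mem_orthogonal p hw)) h_mem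
  have h_w : ‖w‖ ^ 2 ≤ 1 / μ := by
    have h_pyth := norm_add_sq_eq_norm_sq_add_norm_sq_of_inner_eq_zero z w
      (Submodule.inner_right_of_mem_orthogonal hz hw)
    rw [le_div_iff₀ hμ0]
    nlinarith [norm_nonneg z]
  have h_err : ‖(K ^ p) w‖ ^ 2 ≤ Δ ^ p / μ := by
    refine (hK.norm_sq_pow_apply_le hΔ p hw).trans ?_
    rw [div_eq_mul_one_div]
    gcongr
  rw [Submodule.coe_orthogonalProjectionOnto_apply]
  linarith

/-- Iterated error reduction: if `V` is `μ`-overlapping onto `Z` and `K` is a `Δ`-AGSP for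
`Z`, then for every power `p` the subspace `K^p(V)` is `(Δ^p/μ)`-viable for `Z`. -/
theorem agsp_iterated_error_reduction (Z V : Submodule ℂ H) (K : H →L[ℂ] H) (Δ μ : ℝ)
    (hΔ : 0 ≤ Δ) (hK : IsAGSP K Z Δ) (hμ0 : 0 < μ) (hμ1 : μ ≤ 1)
    (hV : ∀ z ∈ Z, ‖z‖ = 1 → μ ≤ ‖(Submodule.orthogonalProjectionOnto V z : H)‖ ^ 2) (p : ℕ) :
    ∀ z ∈ Z, ‖z‖ = 1 →
      1 - Δ ^ p / μ ≤ ‖(Submodule.orthogonalProjectionOnto (V.map ((K ^ p : H →L[ℂ] H) : H →ₗ[ℂ] H)) z : H)‖ ^ 2 :=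
  agsp_iterated_error_reduction_general Z V K Δ μ hΔ hK hμ0 hV p
end
end

section
/- Let H be a finite-dimensional complex inner product space and Z, Z̃ ⊆ H subspaces. Let H̃ be a positive semidefinite self-adjoint operator on H with H̃ z = 0 for all z ∈ Z, H̃(Z⊥) ⊆ Z⊥, and ⟨w, H̃ w⟩ ≥ γ̃·‖w‖² for all w ∈ Z⊥, where γ̃ > 0. If ⟨v, H̃ v⟩ ≤ δ·‖v‖² for all v ∈ Z̃, then γ̃·P_{Z̃} P_{Z⊥} P_{Z̃} ≤ δ·P_{Z̃} in the operator ordering, and consequently ‖P_Z v‖² ≥ 1 − δ/γ̃ for every unit vector v ∈ Z̃; i.e., Z is (δ/γ̃)-viable for Z̃. -/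
noncomputable section

variable {H : Type*} [NormedAddCommGroup H] [InnerProductSpace ℂ H] [FiniteDimensional ℂ H]

/-- If `H̃` is positive semidefinite, vanishes on `Z`, maps `Zᗮ` into itself and has a
spectral gap `γ̃` on `Zᗮ`, and every vector of `Z̃` has energy at most `δ` (relative to its
norm), then `γ̃·P_{Z̃} P_{Zᗮ} P_{Z̃} ≤ δ·P_{Z̃}` and `Z` is `(δ/γ̃)`-viable for `Z̃`. -/
theorem gap_implies_viability (Z Zt : Submodule ℂ H) (Ht : H →L[ℂ] H) (γ δ : ℝ)
    (hγ : 0 < γ)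
    (hsa : IsSelfAdjoint Ht)
    (hpos : ∀ v : H, 0 ≤ (inner ℂ v (Ht v) : ℂ).re)
    (hker : ∀ z ∈ Z, Ht z = 0)
    (hinv : ∀ w ∈ Zᗮ, Ht w ∈ Zᗮ)
    (hgap : ∀ w ∈ Zᗮ, γ * ‖w‖ ^ 2 ≤ (inner ℂ w (Ht w) : ℂ).re)
    (hlow : ∀ v ∈ Zt, (inner ℂ v (Ht v) : ℂ).re ≤ δ * ‖v‖ ^ 2) :
    (∀ v : H,
      γ * ‖(Submodule.orthogonalProjection Zᗮ ((Submodule.orthogonalProjection Zt v : H)) : H)‖ ^ 2 ≤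
        δ * ‖(Submodule.orthogonalProjection Zt v : H)‖ ^ 2) ∧
    (∀ v ∈ Zt, ‖v‖ = 1 → 1 - δ / γ ≤ ‖(Submodule.orthogonalProjection Z v : H)‖ ^ 2) := by
  have key : ∀ u ∈ Zt, γ * ‖(Submodule.orthogonalProjection Zᗮ u : H)‖ ^ 2 ≤ δ * ‖u‖ ^ 2 := by
    intro u hu
    set z : H := (Submodule.orthogonalProjection Z u : H)
    set w : H := (Submodule.orthogonalProjection Zᗮ u : H)
    have hzZ : z ∈ Z := (Submodule.orthogonalProjection Z u).2
    have hwZ : w ∈ Zᗮ := (Submodule.orthogonalProjection Zᗮ u).2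
    have hsum : u = z + w := (Submodule.starProjection_add_starProjection_orthogonal (K := Z) u).symm
    have hHu : Ht u = Ht w := by
      rw [hsum, map_add, hker z hzZ, zero_add]
    have hinner : (inner ℂ u (Ht u) : ℂ) = inner ℂ w (Ht w) := by
      rw [hHu, hsum, inner_add_left]
      rw [hinv w hwZ z hzZ, zero_add]
    calc γ * ‖w‖ ^ 2 ≤ (inner ℂ w (Ht w) : ℂ).re := hgap w hwZ
      _ = (inner ℂ u (Ht u) : ℂ).re := by rw [hinner]
      _ ≤ δ * ‖u‖ ^ 2 := hlow u hu
  refine ⟨fun v => key _ (Submodule.orthogonalProjection Zt v).2, ?_⟩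
  intro v hv hv1
  have h1 : ‖v‖ ^ 2 = ‖(Submodule.orthogonalProjection Z v : H)‖ ^ 2 +
      ‖(Submodule.orthogonalProjection Zᗮ v : H)‖ ^ 2 :=
    Submodule.norm_sq_eq_add_norm_sq_projection v Z
  have h2 := key v hv
  rw [hv1] at h1 h2
  have hw : ‖(Submodule.orthogonalProjection Zᗮ v : H)‖ ^ 2 ≤ δ / γ := by
    rw [le_div_iff₀ hγ]
    nlinarith
  nlinarith [h1, hw]
end
end

section
/- For every real C ≥ 1 there exists a real K ≥ 1 with the following property. For all real numbers γ ∈ (0,1], δ ∈ (0,1), L ≥ 1, h ≥ 2, and N ≥ 3 satisfying h ≥ (log N)³, there exist positive integers m and q with m ≥ 2·log N such that: (i) m·q ≥ 2C·log(1/δ); (ii) m·q ≥ 4C²·L·m²·γ^{−1/2}·h; (iii) m·q ≥ 4C²·L·q·γ^{−1/4}·√(h/m); and (iv) C·L·(m²·γ^{−1/2}·h + q·γ^{−1/4}·√(h/m)) ≤ log(1/δ) + K·γ^{−5/6}·h^{5/3}·L^{7/3}. -/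
/-! Substituting `u = γ^{-1/12}`, `v = h^{1/6}` and `w = (4C²L)^{1/3}` turns every fractional
power into a monomial. Taking `m ≈ 2(wuv)²` gives `m ≥ 2v² ≥ 2 log N` and
`m^{3/2} ≥ (wuv)³ = 4C²L·γ^{-1/4}√h`, which is (iii). Taking `q = ⌈am + 2C log(1/δ)/m⌉` with
`a = 4C²L·γ^{-1/2}h` gives (i) and (ii) while `mq` overshoots `am² + 2C log(1/δ)` by at most `m`.
So `4C` times the cost in (iv) is at most `2am² + m + 2C log(1/δ)`, and
`am² ≲ w⁷u¹⁰v¹⁰ = (4C²L)^{7/3}γ^{-5/6}h^{5/3}`. -/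

open Real

lemma rpow_eq_rpow_pow_of_mul_eq {x : ℝ} (hx : 0 ≤ x) {a b : ℝ} {n : ℕ} (h : a * n = b) :
    x ^ b = (x ^ a) ^ n := by
  rw [← h, rpow_mul_natCast hx]

lemma exists_nat_mem_Icc_two_mul {x : ℝ} (hx : 2⁻¹ ≤ x) :
    ∃ n : ℕ, x ≤ n ∧ (n : ℝ) ≤ 2 * x :=
  ⟨⌈x⌉₊, Nat.le_ceil x, Nat.ceil_le_two_mul hx⟩

lemma exists_nat_balance {a c m : ℝ} (ha : 0 < a) (hc : 0 ≤ c) (hm : 0 < m) :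
    ∃ q : ℕ, 0 < q ∧ a * m ≤ q ∧ c ≤ m * q ∧ m * q ≤ a * m ^ 2 + c + m := by
  set Q := a * m + c / m
  have hQ : 0 < Q := by positivity
  refine ⟨⌈Q⌉₊, Nat.ceil_pos.mpr hQ, ?_, ?_, ?_⟩
  · linarith [Nat.le_ceil Q, div_nonneg hc hm.le]
  · calc c = m * (c / m) := by field_simp
      _ ≤ m * Q := by gcongr; linarith [mul_pos ha hm]
      _ ≤ m * ⌈Q⌉₊ := by gcongr; exact Nat.le_ceil Q
  · calc m * ⌈Q⌉₊ ≤ m * (Q + 1) := by gcongr; exact (Nat.ceil_lt_add_one hQ.le).le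
      _ = a * m ^ 2 + c + m := by simp only [Q]; field_simp

lemma pow_three_div_sqrt_le {x y : ℝ} (hx : 0 ≤ x) (hxy : x ^ 2 ≤ y) : x ^ 3 / √y ≤ y := by
  have hy : 0 ≤ y := (sq_nonneg x).trans hxy
  refine div_le_of_le_mul₀ (sqrt_nonneg y) hy ?_
  calc x ^ 3 = x ^ 2 * x := by ring
    _ ≤ y * √y := mul_le_mul hxy (le_sqrt_of_sq_le hxy) hx hy

theorem exists_balanced_params {C L ℓ u v w : ℝ} (hC : 1 ≤ C) (hℓ : 0 ≤ ℓ)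
    (hu : 1 ≤ u) (hv : 1 ≤ v) (hw : 1 ≤ w) (hwCL : 4 * C ^ 2 * L = w ^ 3) :
    ∃ m q : ℕ, 0 < m ∧ 0 < q ∧ 2 * v ^ 2 ≤ (m : ℝ) ∧ 2 * C * ℓ ≤ (m : ℝ) * q ∧
      4 * C ^ 2 * L * (m : ℝ) ^ 2 * u ^ 6 * v ^ 6 ≤ (m : ℝ) * q ∧
      4 * C ^ 2 * L * (q : ℝ) * u ^ 3 * √(v ^ 6 / m) ≤ (m : ℝ) * q ∧
      C * L * ((m : ℝ) ^ 2 * u ^ 6 * v ^ 6 + (q : ℝ) * u ^ 3 * √(v ^ 6 / m)) ≤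
        ℓ + 9 * (w ^ 7 * u ^ 10 * v ^ 10) := by
  set x := w * u * v with hx_def
  have hwu : 1 ≤ w * u := one_le_mul_of_one_le_of_one_le hw hu
  have hx : 1 ≤ x := one_le_mul_of_one_le_of_one_le hwu hv
  obtain ⟨m, hm_lo, hm_hi⟩ := exists_nat_mem_Icc_two_mul (x := 2 * x ^ 2) (by nlinarith)
  have hm : (0 : ℝ) < m := by nlinarith
  obtain ⟨q, hq, hq_lo, hq_c, hq_hi⟩ := exists_nat_balance (a := w ^ 3 * u ^ 6 * v ^ 6)
    (c := 2 * C * ℓ) (by positivity) (by positivity) hm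
  have hcube : w ^ 3 * u ^ 3 * √(v ^ 6 / m) ≤ (m : ℝ) := by
    rw [sqrt_div' _ hm.le, show v ^ 6 = (v ^ 3) ^ 2 by ring, sqrt_sq (by positivity)]
    calc w ^ 3 * u ^ 3 * (v ^ 3 / √m) = x ^ 3 / √m := by ring
      _ ≤ (m : ℝ) := pow_three_div_sqrt_le (by positivity) (by linarith)
  have hqm : 0 ≤ (q : ℝ) := q.cast_nonneg
  refine ⟨m, q, by exact_mod_cast hm, hq, ?_, hq_c, ?_, ?_, ?_⟩
  · nlinarith [one_le_pow₀ (n := 2) hwu]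
  · rw [hwCL]
    calc w ^ 3 * (m : ℝ) ^ 2 * u ^ 6 * v ^ 6 = m * (w ^ 3 * u ^ 6 * v ^ 6 * m) := by ring
      _ ≤ (m : ℝ) * q := by gcongr
  · rw [hwCL]
    calc w ^ 3 * (q : ℝ) * u ^ 3 * √(v ^ 6 / m) = q * (w ^ 3 * u ^ 3 * √(v ^ 6 / m)) := by
          ring
      _ ≤ (q : ℝ) * m := by gcongr
      _ = (m : ℝ) * q := by ring
  · set W := w ^ 7 * u ^ 10 * v ^ 10
    have hxW : x ^ 2 ≤ W := by
      have : 1 ≤ w ^ 5 * u ^ 8 * v ^ 8 := one_le_mul_of_one_le_of_one_le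
        (one_le_mul_of_one_le_of_one_le (one_le_pow₀ hw) (one_le_pow₀ hu)) (one_le_pow₀ hv)
      calc x ^ 2 ≤ x ^ 2 * (w ^ 5 * u ^ 8 * v ^ 8) := le_mul_of_one_le_right (sq_nonneg x) this
        _ = W := by rw [hx_def]; ring
    have ham : w ^ 3 * u ^ 6 * v ^ 6 * (m : ℝ) ^ 2 ≤ 16 * W :=
      calc w ^ 3 * u ^ 6 * v ^ 6 * (m : ℝ) ^ 2
          ≤ w ^ 3 * u ^ 6 * v ^ 6 * (2 * (2 * x ^ 2)) ^ 2 := by gcongr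
        _ = 16 * W := by rw [hx_def]; ring
    have hcost : 4 * C * (C * L * ((m : ℝ) ^ 2 * u ^ 6 * v ^ 6 + q * u ^ 3 * √(v ^ 6 / m))) ≤
        4 * C * (ℓ + 9 * W) :=
      calc _ = w ^ 3 * u ^ 6 * v ^ 6 * (m : ℝ) ^ 2 + q * (w ^ 3 * u ^ 3 * √(v ^ 6 / m)) := by
            rw [← hwCL]; ring
        _ ≤ w ^ 3 * u ^ 6 * v ^ 6 * (m : ℝ) ^ 2 + q * m := by gcongr
        _ ≤ 36 * W + 2 * C * ℓ := by linarith
        _ ≤ 4 * C * (ℓ + 9 * W) := by nlinarith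
    exact le_of_mul_le_mul_left hcost (by positivity)

/-- Parameter balancing for the implementable AGSP: for every `C ≥ 1` there is `K ≥ 1` such
that for all `γ ∈ (0,1]`, `δ ∈ (0,1)`, `L ≥ 1`, `h ≥ 2`, `N ≥ 3` with `h ≥ (log N)³`,
there are positive integers `m, q` with `m ≥ 2 log N` satisfying
(i) `mq ≥ 2C log(1/δ)`,
(ii) `mq ≥ 4C²L·m²·γ^{-1/2}·h`,
(iii) `mq ≥ 4C²L·q·γ^{-1/4}·√(h/m)`, and
(iv) `CL(m²γ^{-1/2}h + qγ^{-1/4}√(h/m)) ≤ log(1/δ) + K·γ^{-5/6}·h^{5/3}·L^{7/3}`. -/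
theorem agsp_parameter_balancing :
    ∀ C : ℝ, 1 ≤ C → ∃ K : ℝ, 1 ≤ K ∧
      ∀ γ δ L h N : ℝ,
        0 < γ → γ ≤ 1 → 0 < δ → δ < 1 → 1 ≤ L → 2 ≤ h → 3 ≤ N →
        (Real.log N) ^ 3 ≤ h →
        ∃ m q : ℕ, 0 < m ∧ 0 < q ∧ 2 * Real.log N ≤ (m : ℝ) ∧
          (2 * C * Real.log (1 / δ) ≤ (m : ℝ) * q) ∧
          (4 * C ^ 2 * L * (m : ℝ) ^ 2 * γ ^ (-(1 / 2 : ℝ)) * h ≤ (m : ℝ) * q) ∧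
          (4 * C ^ 2 * L * (q : ℝ) * γ ^ (-(1 / 4 : ℝ)) * Real.sqrt (h / m) ≤ (m : ℝ) * q) ∧
          C * L * ((m : ℝ) ^ 2 * γ ^ (-(1 / 2 : ℝ)) * h +
              (q : ℝ) * γ ^ (-(1 / 4 : ℝ)) * Real.sqrt (h / m)) ≤
            Real.log (1 / δ) + K * γ ^ (-(5 / 6 : ℝ)) * h ^ (5 / 3 : ℝ) * L ^ (7 / 3 : ℝ) := by
  intro C hC
  refine ⟨9 * (4 * C ^ 2) ^ (7 / 3 : ℝ), ?_, ?_⟩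
  · have : 1 ≤ (4 * C ^ 2) ^ (7 / 3 : ℝ) := one_le_rpow (by nlinarith) (by norm_num)
    linarith
  intro γ δ L h N hγ hγ1 hδ hδ1 hL hh _ hlogN
  have hP : 1 ≤ 4 * C ^ 2 * L := by nlinarith
  obtain ⟨u, hu, hγ2, hγ4, hγ56⟩ : ∃ u : ℝ, 1 ≤ u ∧ γ ^ (-(1 / 2 : ℝ)) = u ^ 6 ∧
      γ ^ (-(1 / 4 : ℝ)) = u ^ 3 ∧ γ ^ (-(5 / 6 : ℝ)) = u ^ 10 :=
    ⟨γ ^ (-(1 / 12 : ℝ)), one_le_rpow_of_pos_of_le_one_of_nonpos hγ hγ1 (by norm_num),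
      rpow_eq_rpow_pow_of_mul_eq hγ.le (by norm_num),
      rpow_eq_rpow_pow_of_mul_eq hγ.le (by norm_num),
      rpow_eq_rpow_pow_of_mul_eq hγ.le (by norm_num)⟩
  obtain ⟨v, hv, rfl, hh53⟩ : ∃ v : ℝ, 1 ≤ v ∧ h = v ^ 6 ∧ h ^ (5 / 3 : ℝ) = v ^ 10 :=
    ⟨h ^ (1 / 6 : ℝ), one_le_rpow (by linarith) (by norm_num),
      by rw [← rpow_eq_rpow_pow_of_mul_eq (b := 1) (by linarith) (by norm_num), rpow_one],
      rpow_eq_rpow_pow_of_mul_eq (by linarith) (by norm_num)⟩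
  obtain ⟨w, hw, hw3, hw7⟩ : ∃ w : ℝ, 1 ≤ w ∧ 4 * C ^ 2 * L = w ^ 3 ∧
      (4 * C ^ 2) ^ (7 / 3 : ℝ) * L ^ (7 / 3 : ℝ) = w ^ 7 :=
    ⟨(4 * C ^ 2 * L) ^ (1 / 3 : ℝ), one_le_rpow hP (by norm_num),
      by rw [← rpow_eq_rpow_pow_of_mul_eq (b := 1) (by linarith) (by norm_num), rpow_one],
      by rw [← mul_rpow (by positivity) (by linarith)]
         exact rpow_eq_rpow_pow_of_mul_eq (by linarith) (by norm_num)⟩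
  have hlogN_le : log N ≤ v ^ 2 :=
    le_of_pow_le_pow_left₀ three_ne_zero (by positivity) (by rw [← pow_mul]; exact hlogN)
  have hℓ : 0 ≤ log (1 / δ) := log_nonneg ((one_le_div hδ).mpr hδ1.le)
  obtain ⟨m, q, hm, hq, hmv, hi, hii, hiii, hiv⟩ := exists_balanced_params hC hℓ hu hv hw hw3
  refine ⟨m, q, hm, hq, by linarith, hi, by rwa [hγ2], by rwa [hγ4], ?_⟩
  · rw [hγ2, hγ4, hγ56, hh53]
    calc _ ≤ log (1 / δ) + 9 * (w ^ 7 * u ^ 10 * v ^ 10) := by linarith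
      _ = _ := by rw [← hw7]; ring
end
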